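/- arXiv:1411.7245 — 4 statements merged into one kernel-verified Lean document; each statement's English description precedes it below -/
import Mathlib

section
/- For every nonnegative real matrix X, rank(X) = 2 if and only if rank₊(X) = 2. -/
/-!
Since `X = W * H` forces `rank X ≤ rank W`, always `rank X ≤ nnRank X`; the content is the
converse bound for `rank X ≤ 2`. Rescale every nonzero column of `X` to entry sum `1`. The
rescaled columns lie in the column space cut by the hyperplane `∑ i, x i = 1`, an affine space of
dimension `rank X - 1`. For `rank X = 2` they are finitely many points on a line, so all of them
lie on the segment between the two extreme ones, and every column is a nonnegative combination
of these two nonnegative vectors. For `rank X ≤ 1` they all coincide, so then `nnRank X ≤ 1`.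
-/

open Matrix

/-- The nonnegative rank of a real matrix: the smallest `r` such that `X = W * H`
with `W` an (rows × r) matrix and `H` an (r × cols) matrix, both entrywise nonnegative. -/
noncomputable def nnRank {α β : Type*} (X : Matrix α β ℝ) : ℕ :=
  sInf {r : ℕ | ∃ (W : Matrix α (Fin r) ℝ) (H : Matrix (Fin r) β ℝ),
    (∀ i k, 0 ≤ W i k) ∧ (∀ k j, 0 ≤ H k j) ∧ X = W * H}

open Module Submodule

theorem Collinear.exists_subset_segment {𝕜 E : Type*} [Field 𝕜] [LinearOrder 𝕜]
    [IsStrictOrderedRing 𝕜] [AddCommGroup E] [Module 𝕜 E] {S : Set E} (hS : Collinear 𝕜 S)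
    (hfin : S.Finite) (hne : S.Nonempty) : ∃ p ∈ S, ∃ q ∈ S, S ⊆ segment 𝕜 p q := by
  obtain ⟨p₀, hp₀⟩ := hne
  obtain ⟨v, hv⟩ := (collinear_iff_of_mem hp₀).1 hS
  set f : 𝕜 →ᵃ[𝕜] E := AffineMap.lineMap p₀ (v + p₀)
  have hf : ∀ p, ∃ r, p ∈ S → p = f r := fun p => by
    by_cases hp : p ∈ S
    · obtain ⟨r, hr⟩ := hv p hp
      exact ⟨r, fun _ => by simp [f, AffineMap.lineMap_apply, hr]⟩
    · exact ⟨0, fun h => absurd h hp⟩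
  choose r hr using hf
  obtain ⟨p, hp, hmin⟩ := S.exists_min_image r hfin ⟨p₀, hp₀⟩
  obtain ⟨q, hq, hmax⟩ := S.exists_max_image r hfin ⟨p₀, hp₀⟩
  refine ⟨p, hp, q, hq, fun x hx => ?_⟩
  have hx' : r x ∈ segment 𝕜 (r p) (r q) := by
    rw [segment_eq_Icc ((hmin x hx).trans (hmax x hx))]
    exact ⟨hmin x hx, hmax x hx⟩
  rw [hr p hp, hr q hq, ← image_segment]
  exact ⟨r x, hx', (hr x hx).symm⟩

theorem finrank_vectorSpan_lt_of_subset_of_map_eq_one {K E : Type*} [Field K] [AddCommGroup E]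
    [Module K E] {V : Submodule K E} [FiniteDimensional K V] (φ : E →ₗ[K] K) {S : Set E}
    (hSV : S ⊆ V) (hφ : ∀ p ∈ S, φ p = 1) (hne : S.Nonempty) :
    finrank K (vectorSpan K S) < finrank K V := by
  obtain ⟨p₀, hp₀⟩ := hne
  have hle : vectorSpan K S ≤ V ⊓ LinearMap.ker φ := by
    rw [vectorSpan_def, span_le]
    rintro _ ⟨p, hp, q, hq, rfl⟩
    exact ⟨V.sub_mem (hSV hp) (hSV hq), by simp [hφ p hp, hφ q hq]⟩
  have hlt : V ⊓ LinearMap.ker φ < V :=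
    inf_lt_left.2 fun h => by simpa [hφ p₀ hp₀] using h (hSV hp₀)
  exact (finrank_mono hle).trans_lt (finrank_lt_finrank_of_lt hlt)

section normalizeSum

variable {α : Type*} [Fintype α]

noncomputable def normalizeSum (v : α → ℝ) : α → ℝ := (∑ i, v i)⁻¹ • v

variable {v : α → ℝ}

theorem normalizeSum_nonneg (hv : 0 ≤ v) : 0 ≤ normalizeSum v :=
  smul_nonneg (inv_nonneg.2 (Fintype.sum_nonneg hv)) hv

theorem sum_smul_normalizeSum (hv : 0 ≤ v) : (∑ i, v i) • normalizeSum v = v := by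
  rcases eq_or_ne (∑ i, v i) 0 with h | h
  · simp [(Fintype.sum_eq_zero_iff_of_nonneg hv).1 h]
  · simp [normalizeSum, smul_smul, h]

theorem finrank_vectorSpan_normalizeSum_lt {C : Set (α → ℝ)} (hC : ∀ v ∈ C, 0 ≤ v)
    (hne : (C \ {0}).Nonempty) :
    finrank ℝ (vectorSpan ℝ (normalizeSum '' (C \ {0}))) < finrank ℝ (span ℝ C) := by
  refine finrank_vectorSpan_lt_of_subset_of_map_eq_one (∑ i, LinearMap.proj i) ?_ ?_
    (hne.image _)
  · rintro _ ⟨v, hv, rfl⟩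
    exact smul_mem _ _ (subset_span hv.1)
  · rintro _ ⟨v, ⟨hvC, hv0⟩, rfl⟩
    have hsum : ∑ i, v i ≠ 0 := by
      rwa [Ne, Fintype.sum_eq_zero_iff_of_nonneg (hC v hvC)]
    simp [normalizeSum, hsum]

theorem exists_nonneg_smul_of_finrank_span_le_one {C : Set (α → ℝ)} (hC : ∀ v ∈ C, 0 ≤ v)
    (h : finrank ℝ (span ℝ C) ≤ 1) : ∃ u, 0 ≤ u ∧ ∀ v ∈ C, ∃ a : ℝ, 0 ≤ a ∧ v = a • u := by
  rcases (C \ {0}).eq_empty_or_nonempty with hemp | hne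
  · refine ⟨0, le_rfl, fun v hv => ⟨0, le_rfl, ?_⟩⟩
    simpa using Set.sdiff_eq_empty.1 hemp hv
  obtain ⟨v₀, hv₀⟩ := hne
  have hsub : (normalizeSum '' (C \ {0})).Subsingleton := by
    rw [← vectorSpan_eq_bot_iff_subsingleton (k := ℝ), ← finrank_eq_zero]
    have := finrank_vectorSpan_normalizeSum_lt hC ⟨v₀, hv₀⟩
    omega
  refine ⟨normalizeSum v₀, normalizeSum_nonneg (hC v₀ hv₀.1), fun v hv => ?_⟩
  by_cases hv0 : v = 0
  · exact ⟨0, le_rfl, by simp [hv0]⟩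
  refine ⟨∑ i, v i, Fintype.sum_nonneg (hC v hv), ?_⟩
  rw [← hsub ⟨v, ⟨hv, hv0⟩, rfl⟩ ⟨v₀, hv₀, rfl⟩, sum_smul_normalizeSum (hC v hv)]

theorem exists_nonneg_combination_of_finrank_span_le_two {C : Set (α → ℝ)} (hfin : C.Finite)
    (hC : ∀ v ∈ C, 0 ≤ v) (h : finrank ℝ (span ℝ C) ≤ 2) :
    ∃ u w, 0 ≤ u ∧ 0 ≤ w ∧ ∀ v ∈ C, ∃ a b : ℝ, 0 ≤ a ∧ 0 ≤ b ∧ v = a • u + b • w := by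
  rcases (C \ {0}).eq_empty_or_nonempty with hemp | hne
  · refine ⟨0, 0, le_rfl, le_rfl, fun v hv => ⟨0, 0, le_rfl, le_rfl, ?_⟩⟩
    simpa using Set.sdiff_eq_empty.1 hemp hv
  have hcol : Collinear ℝ (normalizeSum '' (C \ {0})) := by
    rw [collinear_iff_finrank_le_one]
    have := finrank_vectorSpan_normalizeSum_lt hC hne
    omega
  obtain ⟨_, ⟨p, hp, rfl⟩, _, ⟨q, hq, rfl⟩, hseg⟩ :=
    hcol.exists_subset_segment (hfin.sdiff.image _) (hne.image _)
  refine ⟨normalizeSum p, normalizeSum q, normalizeSum_nonneg (hC p hp.1),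
    normalizeSum_nonneg (hC q hq.1), fun v hv => ?_⟩
  by_cases hv0 : v = 0
  · exact ⟨0, 0, le_rfl, le_rfl, by simp [hv0]⟩
  obtain ⟨θ₁, θ₂, hθ₁, hθ₂, -, hθ⟩ := hseg ⟨v, ⟨hv, hv0⟩, rfl⟩
  have hs := Fintype.sum_nonneg (hC v hv)
  refine ⟨(∑ i, v i) * θ₁, (∑ i, v i) * θ₂, mul_nonneg hs hθ₁, mul_nonneg hs hθ₂, ?_⟩
  rw [mul_smul, mul_smul, ← smul_add, hθ, sum_smul_normalizeSum (hC v hv)]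

end normalizeSum

section nnRank

variable {α β : Type*}

theorem nnRank_le_of_eq_mul {r : ℕ} {X : Matrix α β ℝ} (W : Matrix α (Fin r) ℝ)
    (H : Matrix (Fin r) β ℝ) (hW : ∀ i k, 0 ≤ W i k) (hH : ∀ k j, 0 ≤ H k j) (hX : X = W * H) :
    nnRank X ≤ r :=
  Nat.sInf_le ⟨W, H, hW, hH, hX⟩

theorem nnRank_le_of_forall_col_eq_sum {r : ℕ} {X : Matrix α β ℝ}
    (u : Fin r → α → ℝ) (hu : ∀ k, 0 ≤ u k)
    (h : ∀ j, ∃ c : Fin r → ℝ, 0 ≤ c ∧ X.col j = ∑ k, c k • u k) : nnRank X ≤ r := by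
  choose c hc hXc using h
  refine nnRank_le_of_eq_mul (of fun i k => u k i) (of fun k j => c j k)
    (fun i k => hu k i) (fun k j => hc j k) ?_
  ext i j
  simpa [mul_apply, mul_comm] using congrFun (hXc j) i

theorem rank_le_nnRank {n : ℕ} {X : Matrix α (Fin n) ℝ} (hX : ∀ i j, 0 ≤ X i j) :
    X.rank ≤ nnRank X := by
  have hfactor : nnRank X ∈ {r : ℕ | ∃ (W : Matrix α (Fin r) ℝ) (H : Matrix (Fin r) (Fin n) ℝ),
      (∀ i k, 0 ≤ W i k) ∧ (∀ k j, 0 ≤ H k j) ∧ X = W * H} :=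
    Nat.sInf_mem ⟨n, X, 1, hX, fun k j => by by_cases h : k = j <;> simp [one_apply, h],
      (Matrix.mul_one X).symm⟩
  obtain ⟨W, H, -, -, hWH⟩ := hfactor
  calc X.rank = (W * H).rank := by rw [← hWH]
    _ ≤ W.rank := rank_mul_le_left W H
    _ ≤ nnRank X := W.rank_le_card_width.trans_eq (Fintype.card_fin _)

variable [Fintype α] [Fintype β] {X : Matrix α β ℝ}

theorem nnRank_le_one_of_rank_le_one (hX : ∀ i j, 0 ≤ X i j) (h : X.rank ≤ 1) :
    nnRank X ≤ 1 := by
  rw [rank_eq_finrank_span_cols] at h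
  obtain ⟨u, hu, hcols⟩ := exists_nonneg_smul_of_finrank_span_le_one
    (by rintro _ ⟨j, rfl⟩ i; exact hX i j) h
  refine nnRank_le_of_forall_col_eq_sum ![u] (by simpa) fun j => ?_
  obtain ⟨a, ha, hj⟩ := hcols _ ⟨j, rfl⟩
  exact ⟨![a], by simpa [Pi.le_def], by simpa using hj⟩

theorem nnRank_le_two_of_rank_le_two (hX : ∀ i j, 0 ≤ X i j) (h : X.rank ≤ 2) :
    nnRank X ≤ 2 := by
  rw [rank_eq_finrank_span_cols] at h
  obtain ⟨u, w, hu, hw, hcols⟩ := exists_nonneg_combination_of_finrank_span_le_two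
    (Set.finite_range _) (by rintro _ ⟨j, rfl⟩ i; exact hX i j) h
  refine nnRank_le_of_forall_col_eq_sum ![u, w] (by simp [Fin.forall_fin_two, hu, hw]) fun j => ?_
  obtain ⟨a, b, ha, hb, hj⟩ := hcols _ ⟨j, rfl⟩
  exact ⟨![a, b], by simp [Pi.le_def, Fin.forall_fin_two, ha, hb], by simpa using hj⟩

end nnRank

theorem rank_two_iff_nnRank_two {m n : ℕ} (X : Matrix (Fin m) (Fin n) ℝ)
    (hX : ∀ i j, 0 ≤ X i j) :
    X.rank = 2 ↔ nnRank X = 2 := by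
  have hrank := rank_le_nnRank hX
  constructor
  · intro h
    have hle := nnRank_le_two_of_rank_le_two hX h.le
    omega
  · intro h
    have hgt : ¬X.rank ≤ 1 := mt (nnRank_le_one_of_rank_le_one hX) (by omega)
    omega
end

section
/- Let a ∈ ℝⁿ have pairwise distinct entries and let X_a be the n×n linear Euclidean distance matrix X_a(i,j) = (a_i − a_j)². Then rank₊(X_a) ≥ min{ k : C(k, ⌊k/2⌋) ≥ n } ≥ log₂(n), where C(k, ⌊k/2⌋) denotes the binomial coefficient k choose ⌊k/2⌋. -/
open Matrix

/-!
A nonnegative factorization `X = W * H` with inner dimension `r` assigns to each row index `i`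
the support `S i ⊆ {1, …, r}` of the `i`-th row of `W`, and to each column index `j` the support
`T j` of the `j`-th column of `H`; since there is no cancellation, `X i j = 0` exactly when
`S i` and `T j` are disjoint. For a linear Euclidean distance matrix with distinct points the
diagonal vanishes and all other entries are positive, so `S i ∩ T i = ∅` while `S i ∩ T j ≠ ∅`
for `i ≠ j`. Hence no `S i` is contained in another `S j`: the rows give an antichain of `n`
subsets of an `r`-set, and Sperner's theorem yields `n ≤ C(r, ⌊r/2⌋) ≤ 2 ^ r`.
-/

open Finset

namespace Matrix

variable {ι κ : Type*} [Fintype κ]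

noncomputable def rowSupport (W : Matrix ι κ ℝ) (i : ι) : Finset κ := {k | W i k ≠ 0}

noncomputable def colSupport (H : Matrix κ ι ℝ) (j : ι) : Finset κ := {k | H k j ≠ 0}

theorem mul_apply_eq_zero_iff_disjoint_support {W : Matrix ι κ ℝ} {H : Matrix κ ι ℝ} {i j : ι}
    (hW : ∀ k, 0 ≤ W i k) (hH : ∀ k, 0 ≤ H k j) :
    (W * H) i j = 0 ↔ Disjoint (W.rowSupport i) (H.colSupport j) := by
  rw [mul_apply, sum_eq_zero_iff_of_nonneg fun k _ => mul_nonneg (hW k) (hH k),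
    disjoint_left]
  simp [rowSupport, colSupport, imp_iff_not_or]

theorem card_le_choose_half_of_nonneg_mul {W : Matrix ι κ ℝ} {H : Matrix κ ι ℝ} [Fintype ι]
    (hW : ∀ i k, 0 ≤ W i k) (hH : ∀ k j, 0 ≤ H k j) (hdiag : ∀ i, (W * H) i i = 0)
    (hoff : ∀ i j, i ≠ j → (W * H) i j ≠ 0) :
    Fintype.card ι ≤ (Fintype.card κ).choose (Fintype.card κ / 2) := by
  classical
  have hdisj (i j : ι) : (W * H) i j = 0 ↔ Disjoint (W.rowSupport i) (H.colSupport j) :=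
    mul_apply_eq_zero_iff_disjoint_support (hW i) (hH · j)
  have not_subset {i j : ι} (hij : i ≠ j) : ¬ W.rowSupport i ⊆ W.rowSupport j := fun hsub =>
    hoff i j hij <| (hdisj i j).2 <| ((hdisj j j).1 (hdiag j)).mono_left hsub
  have hinj : Function.Injective W.rowSupport := fun i j hij => by
    by_contra hne
    exact not_subset hne hij.subset
  have hanti : IsAntichain (· ⊆ ·) (SetLike.coe (univ.image W.rowSupport)) := by
    rintro _ hs _ ht hst hsub
    simp only [coe_image, coe_univ, Set.image_univ, Set.mem_range] at hs ht
    obtain ⟨i, rfl⟩ := hs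
    obtain ⟨j, rfl⟩ := ht
    exact not_subset (ne_of_apply_ne _ hst) hsub
  simpa [card_image_of_injective _ hinj] using hanti.sperner

end Matrix

theorem exists_nonneg_factorization_nnRank {α β : Type*} [Fintype β] (X : Matrix α β ℝ)
    (hX : ∀ i j, 0 ≤ X i j) :
    ∃ (W : Matrix α (Fin (nnRank X)) ℝ) (H : Matrix (Fin (nnRank X)) β ℝ),
      (∀ i k, 0 ≤ W i k) ∧ (∀ k j, 0 ≤ H k j) ∧ X = W * H := by
  classical
  refine Nat.sInf_mem (s := {r : ℕ | ∃ (W : Matrix α (Fin r) ℝ) (H : Matrix (Fin r) β ℝ),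
    (∀ i k, 0 ≤ W i k) ∧ (∀ k j, 0 ≤ H k j) ∧ X = W * H}) ?_
  let e := Fintype.equivFin β
  refine ⟨Fintype.card β, X.submatrix id e.symm, (1 : Matrix β β ℝ).submatrix e.symm id,
    fun i k => hX _ _, fun k j => ?_, ?_⟩
  · simp only [submatrix_apply, id_eq, one_apply]
    split_ifs <;> norm_num
  · rw [submatrix_mul_equiv, Matrix.mul_one, submatrix_id_id]

theorem card_le_choose_half_nnRank {ι : Type*} [Fintype ι] (X : Matrix ι ι ℝ)
    (hX : ∀ i j, 0 ≤ X i j) (hdiag : ∀ i, X i i = 0) (hoff : ∀ i j, i ≠ j → X i j ≠ 0) :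
    Fintype.card ι ≤ (nnRank X).choose (nnRank X / 2) := by
  obtain ⟨W, H, hW, hH, hWH⟩ := exists_nonneg_factorization_nnRank X hX
  rw [hWH] at hdiag hoff
  simpa using card_le_choose_half_of_nonneg_mul hW hH hdiag hoff

theorem Real.logb_two_le_of_le_two_pow {n k : ℕ} (h : n ≤ 2 ^ k) : Real.logb 2 n ≤ k := by
  rcases n.eq_zero_or_pos with rfl | hn
  · simp
  rw [Real.logb_le_iff_le_rpow one_lt_two (by exact_mod_cast hn), Real.rpow_natCast]
  exact_mod_cast h

theorem nnRank_linear_EDM_lower_bound {n : ℕ} (a : Fin n → ℝ)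
    (ha : Function.Injective a) :
    sInf {k : ℕ | n ≤ k.choose (k / 2)} ≤ nnRank (Matrix.of fun i j : Fin n => (a i - a j) ^ 2) ∧
    Real.logb 2 n ≤ ((sInf {k : ℕ | n ≤ k.choose (k / 2)} : ℕ) : ℝ) := by
  set X := Matrix.of fun i j : Fin n => (a i - a j) ^ 2
  have hrank : n ≤ (nnRank X).choose (nnRank X / 2) := by
    simpa using card_le_choose_half_nnRank X (fun i j => sq_nonneg (a i - a j)) (by simp [X])
      (fun i j hij => by simpa [X, sub_eq_zero] using ha.ne hij)
  have hmin : n ≤ _ := Nat.sInf_mem (s := {k : ℕ | n ≤ k.choose (k / 2)}) ⟨_, hrank⟩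
  exact ⟨Nat.sInf_le hrank,
    Real.logb_two_le_of_le_two_pow (hmin.trans (Nat.choose_le_two_pow _ _))⟩
end

section
/- For every integer k ≥ 1 and n = 2^k, the linear Euclidean distance matrix X_{[n]} defined by X_{[n]}(i,j) = (i − j)² for 1 ≤ i, j ≤ n satisfies rank₊(X_{[n]}) ≤ 2 log₂(n) = 2k. -/
open Matrix

/-- The m×m linear Euclidean distance matrix with entries `(i - j)²`. -/
noncomputable def LEDM (m : ℕ) : Matrix (Fin m) (Fin m) ℝ :=
  Matrix.of fun i j => ((i : ℝ) - (j : ℝ)) ^ 2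

/-!
Reflecting `{0, …, 2n-1}` onto `{0, …, n-1}` by `x ↦ min x (2t - x)` about the midpoint
`t = n - 1/2` changes `(x - y)²` exactly by `4 ((t - x)⁺ (y - t)⁺ + (x - t)⁺ (t - y)⁺)`, a sum of
two nonnegative rank-one matrices. Hence `X_{[2n]}` is a submatrix of `X_{[n]}` plus a matrix of
nonnegative rank at most `2`, and `k` reflections bring `X_{[2^k]}` down to `X_{[1]} = 0`.
-/

def HasNonnegFactorization {α β : Type*} (X : Matrix α β ℝ) (r : ℕ) : Prop :=
  ∃ (W : Matrix α (Fin r) ℝ) (H : Matrix (Fin r) β ℝ),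
    (∀ i k, 0 ≤ W i k) ∧ (∀ k j, 0 ≤ H k j) ∧ X = W * H

namespace HasNonnegFactorization

variable {α β : Type*}

theorem nnRank_le {X : Matrix α β ℝ} {r : ℕ} (h : HasNonnegFactorization X r) :
    nnRank X ≤ r :=
  Nat.sInf_le h

theorem zero : HasNonnegFactorization (0 : Matrix α β ℝ) 0 :=
  ⟨0, 0, fun _ k => k.elim0, fun k _ => k.elim0, (Matrix.mul_zero _).symm⟩

theorem vecMulVec {u : α → ℝ} {v : β → ℝ} (hu : 0 ≤ u) (hv : 0 ≤ v) :
    HasNonnegFactorization (Matrix.vecMulVec u v) 1 :=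
  ⟨Matrix.of fun i _ => u i, Matrix.of fun _ j => v j, fun i _ => hu i, fun _ j => hv j, by
    ext i j
    simp [Matrix.vecMulVec_apply, mul_apply]⟩

theorem add {X Y : Matrix α β ℝ} {r s : ℕ}
    (hX : HasNonnegFactorization X r) (hY : HasNonnegFactorization Y s) :
    HasNonnegFactorization (X + Y) (r + s) := by
  obtain ⟨W₁, H₁, hW₁, hH₁, rfl⟩ := hX
  obtain ⟨W₂, H₂, hW₂, hH₂, rfl⟩ := hY
  refine ⟨(fromCols W₁ W₂).submatrix id finSumFinEquiv.symm,
    (fromRows H₁ H₂).submatrix finSumFinEquiv.symm id, ?_, ?_, ?_⟩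
  · intro i k
    rcases h : finSumFinEquiv.symm k with k | k <;> simp [h, hW₁, hW₂]
  · intro k j
    rcases h : finSumFinEquiv.symm k with k | k <;> simp [h, hH₁, hH₂]
  · rw [submatrix_mul_equiv, fromCols_mul_fromRows, submatrix_id_id]

theorem submatrix {α' β' : Type*} {X : Matrix α β ℝ} {r : ℕ} (h : HasNonnegFactorization X r)
    (f : α' → α) (g : β' → β) : HasNonnegFactorization (X.submatrix f g) r := by
  obtain ⟨W, H, hW, hH, rfl⟩ := h
  exact ⟨W.submatrix f id, H.submatrix id g, fun i k => hW _ _, fun k j => hH _ _,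
    (submatrix_mul_equiv W H f (Equiv.refl _) g).symm⟩

end HasNonnegFactorization

theorem sq_sub_eq_sq_sub_reflect_add_posPart (t x y : ℝ) :
    (x - y) ^ 2 = (min x (2 * t - x) - min y (2 * t - y)) ^ 2
      + 2 * (t - x)⁺ * (2 * (y - t)⁺) + 2 * (x - t)⁺ * (2 * (t - y)⁺) := by
  simp only [posPart_def, min_def, max_def]
  split_ifs <;> nlinarith

def foldHalf (k : ℕ) (i : Fin (2 ^ (k + 1))) : Fin (2 ^ k) :=
  ⟨min i (2 ^ (k + 1) - 1 - i), by have := i.isLt; rw [pow_succ] at *; omega⟩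

theorem cast_foldHalf (k : ℕ) (i : Fin (2 ^ (k + 1))) :
    ((foldHalf k i : ℕ) : ℝ) = min (i : ℝ) (2 ^ (k + 1) - 1 - i) := by
  have := i.isLt
  simp only [foldHalf, Nat.cast_min]
  rw [Nat.cast_sub (by omega), Nat.cast_sub (by omega)]
  push_cast
  rfl

theorem LEDM_pow_two_succ (k : ℕ) :
    let t : ℝ := (2 ^ (k + 1) - 1) / 2
    LEDM (2 ^ (k + 1)) = (LEDM (2 ^ k)).submatrix (foldHalf k) (foldHalf k)
      + vecMulVec (fun i : Fin _ => 2 * (t - i)⁺) (fun j : Fin _ => 2 * (j - t)⁺)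
      + vecMulVec (fun i : Fin _ => 2 * (i - t)⁺) (fun j : Fin _ => 2 * (t - j)⁺) := by
  intro t
  have ht : (2 : ℝ) ^ (k + 1) - 1 = 2 * t := by simp only [t]; ring
  ext i j
  simp only [LEDM, Matrix.add_apply, submatrix_apply, of_apply,
    vecMulVec_apply, cast_foldHalf, ht]
  exact sq_sub_eq_sq_sub_reflect_add_posPart t i j

theorem hasNonnegFactorization_LEDM_pow_two (k : ℕ) :
    HasNonnegFactorization (LEDM (2 ^ k)) (2 * k) := by
  induction k with
  | zero =>
    convert HasNonnegFactorization.zero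
    ext i j
    obtain rfl : i = j := Fin.ext (by omega)
    simp [LEDM]
  | succ k ih =>
    have hpos {a : Fin (2 ^ (k + 1)) → ℝ} : 0 ≤ fun i => 2 * (a i)⁺ :=
      fun i => by positivity
    rw [LEDM_pow_two_succ, mul_add, mul_one]
    exact ((ih.submatrix _ _).add (.vecMulVec hpos hpos)).add (.vecMulVec hpos hpos)

theorem nnRank_LEDM_pow_two_le_general (k : ℕ) :
    nnRank (LEDM (2 ^ k)) ≤ 2 * k :=
  (hasNonnegFactorization_LEDM_pow_two k).nnRank_le

theorem nnRank_LEDM_pow_two_le (k : ℕ) (hk : 1 ≤ k) :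
    nnRank (LEDM (2 ^ k)) ≤ 2 * k :=
  nnRank_LEDM_pow_two_le_general k
end

section
/- Every nonnegative real m×n matrix X admits an optimal rank-one approximation in Frobenius norm that is itself nonnegative: there exist vectors w ∈ ℝ^m and h ∈ ℝ^n with all entries ≥ 0 such that ‖X − w hᵀ‖_F ≤ ‖X − Y‖_F for every real m×n matrix Y with rank(Y) ≤ 1. -/
/-!
Entrywise `|x - |y|| ≤ |x - y|` for `x ≥ 0`, so replacing a rank-one matrix `u vᵀ` by `|u| |v|ᵀ`
never increases its distance to a nonnegative `X`; it suffices to minimise `‖X - w hᵀ‖` over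
nonnegative `w, h`. A competitor farther from `X` than `0` is irrelevant, and every other one can be
rebalanced to `‖h‖∞ ≤ 1`, `‖w‖∞ ≤ 2‖X‖`, a compact set of factors.
-/

open Matrix

attribute [local instance] Matrix.frobeniusSeminormedAddCommGroup

namespace Matrix

theorem exists_vecMulVec_eq_of_rank_le_one {K m n : Type*} [Field K] [Fintype n]
    {Y : Matrix m n K} (hY : Y.rank ≤ 1) : ∃ (u : m → K) (v : n → K), vecMulVec u v = Y := by
  classical
  obtain ⟨u, hu⟩ := finrank_le_one_iff.mp hY
  have hcol : ∀ j, ∃ c : K, c • (u : m → K) = Y *ᵥ Pi.single j 1 := fun j => by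
    obtain ⟨c, hc⟩ := hu ⟨_, LinearMap.mem_range_self Y.mulVecLin (Pi.single j 1)⟩
    exact ⟨c, congrArg Subtype.val hc⟩
  choose v hv using hcol
  refine ⟨u, v, ext fun i j => ?_⟩
  simpa [vecMulVec_apply, mul_comm] using congrFun (hv j) i

variable {m n α : Type*} [Fintype m] [Fintype n]

theorem norm_entry_le_frobenius_norm [SeminormedAddCommGroup α] (A : Matrix m n α) (i : m)
    (j : n) : ‖A i j‖ ≤ ‖A‖ :=
  (PiLp.norm_apply_le (WithLp.toLp 2 fun j => A i j) j).trans
    (PiLp.norm_apply_le (WithLp.toLp 2 fun i => WithLp.toLp 2 fun j => A i j) i)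

theorem frobenius_norm_mono [SeminormedAddCommGroup α] {A B : Matrix m n α}
    (h : ∀ i j, ‖A i j‖ ≤ ‖B i j‖) : ‖A‖ ≤ ‖B‖ := by
  rw [frobenius_norm_def, frobenius_norm_def]
  gcongr with i _ j _
  exact h i j

theorem frobenius_norm_eq_sqrt (A : Matrix m n ℝ) : ‖A‖ = √(∑ i, ∑ j, A i j ^ 2) := by
  rw [frobenius_norm_def, Real.sqrt_eq_rpow]
  simp

theorem exists_bounded_nonneg_factors_of_norm_vecMulVec_le {w : m → ℝ} {h : n → ℝ}
    (hw : 0 ≤ w) (hh : 0 ≤ h) {c : ℝ} (hc : ‖vecMulVec w h‖ ≤ c) :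
    ∃ (w' : m → ℝ) (h' : n → ℝ), (0 ≤ w' ∧ ‖w'‖ ≤ c) ∧ (0 ≤ h' ∧ ‖h'‖ ≤ 1) ∧
      vecMulVec w' h' = vecMulVec w h := by
  have hc₀ : 0 ≤ c := (norm_nonneg _).trans hc
  rcases eq_or_ne h 0 with rfl | hh₀
  · exact ⟨0, 0, ⟨le_rfl, by simpa using hc₀⟩, ⟨le_rfl, by simp⟩, by ext; simp [vecMulVec_apply]⟩
  refine ⟨‖h‖ • w, ‖h‖⁻¹ • h, ⟨smul_nonneg (norm_nonneg h) hw, ?_⟩,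
    ⟨smul_nonneg (inv_nonneg.mpr (norm_nonneg h)) hh, (norm_smul_inv_norm hh₀).le⟩, ?_⟩
  · refine (pi_norm_le_iff_of_nonneg hc₀).mpr fun i => ?_
    have hrow : ‖w i • h‖ ≤ c := (pi_norm_le_iff_of_nonneg hc₀).mpr fun j =>
      (norm_entry_le_frobenius_norm (vecMulVec w h) i j).trans hc
    simpa only [Pi.smul_apply, norm_smul, norm_norm, mul_comm] using hrow
  · rw [smul_vecMulVec, vecMulVec_smul, smul_smul, mul_inv_cancel₀ (norm_ne_zero_iff.mpr hh₀),
      one_smul]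

theorem exists_nonneg_vecMulVec_forall_norm_sub_le (X : Matrix m n ℝ) :
    ∃ (w : m → ℝ) (h : n → ℝ), 0 ≤ w ∧ 0 ≤ h ∧ ∀ (w' : m → ℝ) (h' : n → ℝ), 0 ≤ w' → 0 ≤ h' →
      ‖X - vecMulVec w h‖ ≤ ‖X - vecMulVec w' h'‖ := by
  set K := (Set.Ici 0 ∩ Metric.closedBall (0 : m → ℝ) (2 * ‖X‖)) ×ˢ
    (Set.Ici 0 ∩ Metric.closedBall (0 : n → ℝ) 1)
  have hK : IsCompact K := ((isCompact_closedBall _ _).inter_left isClosed_Ici).prod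
    ((isCompact_closedBall _ _).inter_left isClosed_Ici)
  have h₀ : ((0 : m → ℝ), (0 : n → ℝ)) ∈ K := by simp [K]
  obtain ⟨p, ⟨⟨hp₁, -⟩, ⟨hp₂, -⟩⟩, hmin⟩ := hK.exists_isMinOn ⟨_, h₀⟩
    (f := fun p => ‖X - vecMulVec p.1 p.2‖) (by fun_prop)
  refine ⟨p.1, p.2, hp₁, hp₂, fun w h hw hh => ?_⟩
  rcases le_or_gt ‖X‖ ‖X - vecMulVec w h‖ with hfar | hnear
  · calc ‖X - vecMulVec p.1 p.2‖ ≤ ‖X - vecMulVec 0 0‖ := hmin h₀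
      _ = ‖X‖ := by rw [zero_vecMulVec, sub_zero]
      _ ≤ ‖X - vecMulVec w h‖ := hfar
  have hbound : ‖vecMulVec w h‖ ≤ 2 * ‖X‖ := by
    linarith [norm_le_norm_add_norm_sub' (vecMulVec w h) X, norm_sub_rev (vecMulVec w h) X]
  obtain ⟨w', h', hw', hh', hwh⟩ :=
    exists_bounded_nonneg_factors_of_norm_vecMulVec_le hw hh hbound
  have hmem : (w', h') ∈ K := ⟨⟨hw'.1, by simpa using hw'.2⟩, ⟨hh'.1, by simpa using hh'.2⟩⟩
  simpa [hwh] using hmin hmem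

end Matrix

theorem exists_nonneg_best_rank_one_approximation {m n : ℕ}
    (X : Matrix (Fin m) (Fin n) ℝ) (hX : ∀ i j, 0 ≤ X i j) :
    ∃ (w : Fin m → ℝ) (h : Fin n → ℝ),
      (∀ i, 0 ≤ w i) ∧ (∀ j, 0 ≤ h j) ∧
      ∀ Y : Matrix (Fin m) (Fin n) ℝ, Y.rank ≤ 1 →
        Real.sqrt (∑ i, ∑ j, (X i j - w i * h j) ^ 2) ≤
        Real.sqrt (∑ i, ∑ j, (X i j - Y i j) ^ 2) := by
  obtain ⟨w, h, hw, hh, hmin⟩ := exists_nonneg_vecMulVec_forall_norm_sub_le X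
  refine ⟨w, h, hw, hh, fun Y hY => ?_⟩
  obtain ⟨u, v, rfl⟩ := exists_vecMulVec_eq_of_rank_le_one hY
  have hflip : ∀ i j, |X i j - (|u i| * |v j|)| ≤ |X i j - u i * v j| := fun i j => by
    simpa only [abs_of_nonneg (hX i j), abs_mul] using
      abs_abs_sub_abs_le_abs_sub (X i j) (u i * v j)
  have key : ‖X - vecMulVec w h‖ ≤ ‖X - vecMulVec u v‖ :=
    calc ‖X - vecMulVec w h‖ ≤ ‖X - vecMulVec |u| |v|‖ := hmin _ _ (abs_nonneg u) (abs_nonneg v)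
      _ ≤ ‖X - vecMulVec u v‖ :=
        frobenius_norm_mono fun i j => by simpa [vecMulVec_apply] using hflip i j
  simpa only [frobenius_norm_eq_sqrt, Matrix.sub_apply, vecMulVec_apply] using key
end
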